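/- arXiv:2202.00098 — 10 statements merged into one kernel-verified Lean document; each statement's English description precedes it below -/
import Mathlib

section
/- Let ṽ ∈ Y be a global minimizer of J over Y. Then the vector ũ = L*ṽ is feasible for the constrained problem, i.e. ‖L(L*ṽ) − f‖ ≤ ε, and it has minimal norm among all feasible vectors: for every u ∈ X with ‖Lu − f‖ ≤ ε one has ‖L*ṽ‖ ≤ ‖u‖. -/
open RealInnerProductSpace ContinuousLinearMap

private lemma aux_nonneg {b c : ℝ} (hb : 0 ≤ b) (h : ∀ t : ℝ, 0 < t → 0 ≤ c + t * b) :
    0 ≤ c := by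
  by_contra hc
  push_neg at hc
  have ht : 0 < -c / (b + 1) := div_pos (by linarith) (by linarith)
  have h1 := h _ ht
  have h2 : -c / (b + 1) * b < -c := by
    rw [div_mul_eq_mul_div, div_lt_iff₀ (by linarith)]
    nlinarith
  linarith

private lemma aux_nonpos {b c : ℝ} (hb : 0 ≤ b) (h : ∀ s : ℝ, 0 < s → s < 1 → c ≤ s * b) :
    c ≤ 0 := by
  by_contra hc
  push_neg at hc
  have hs1 : 0 < min (1/2) (c / (2*(b+1))) :=
    lt_min (by norm_num) (div_pos hc (by linarith))
  have hs2 : min (1/2) (c / (2*(b+1))) < 1 :=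
    lt_of_le_of_lt (min_le_left _ _) (by norm_num)
  have h3 := h _ hs1 hs2
  have h4 : min (1/2) (c / (2*(b+1))) * b ≤ (c/(2*(b+1))) * b :=
    mul_le_mul_of_nonneg_right (min_le_right _ _) hb
  have h5 : (c/(2*(b+1))) * b < c := by
    rw [div_mul_eq_mul_div, div_lt_iff₀ (by linarith)]
    nlinarith
  linarith

private lemma cancel_pos {s x : ℝ} (hs : 0 < s) (h : 0 ≤ s * x) : 0 ≤ x :=
  le_of_mul_le_mul_left (by linarith : s * 0 ≤ s * x) hs

/-- If ṽ is a global minimizer of J(v) = (1/2)‖L*v‖² + ε‖v‖ − ⟨f, v⟩ over Y, then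
ũ = L*ṽ is feasible (‖L(L*ṽ) − f‖ ≤ ε) and has minimal norm among feasible vectors. -/
theorem optimal_approximate_solution
    {X Y : Type*} [NormedAddCommGroup X] [InnerProductSpace ℝ X] [CompleteSpace X]
    [NormedAddCommGroup Y] [InnerProductSpace ℝ Y] [CompleteSpace Y]
    (L : X →L[ℝ] Y) (hinj : Function.Injective (adjoint L))
    (f : Y) (ε : ℝ) (hε : 0 < ε)
    (J : Y → ℝ)
    (hJ : J = fun v => (1/2) * ‖adjoint L v‖^2 + ε * ‖v‖ - ⟪f, v⟫)
    (vt : Y) (hmin : ∀ v : Y, J vt ≤ J v) :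
    ‖L (adjoint L vt) - f‖ ≤ ε ∧
      ∀ u : X, ‖L u - f‖ ≤ ε → ‖adjoint L vt‖ ≤ ‖u‖ := by
  subst hJ
  set A := adjoint L with hA
  -- Directional optimality: for all w, ⟪L(Avt) - f, w⟫ + ε‖w‖ ≥ 0
  have key1 : ∀ w : Y, 0 ≤ ⟪L (A vt) - f, w⟫ + ε * ‖w‖ := by
    intro w
    apply aux_nonneg (b := ‖A w‖^2 / 2) (by positivity)
    intro t ht
    have h := hmin (vt + t • w)
    simp only at h
    have e1 : A (vt + t • w) = A vt + t • A w := by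
      rw [map_add, map_smul]
    have e2 : ‖A vt + t • A w‖^2 = ‖A vt‖^2 + 2*(t*⟪A vt, A w⟫) + t^2*‖A w‖^2 := by
      rw [norm_add_sq_real, real_inner_smul_right, norm_smul]
      rw [mul_pow, Real.norm_eq_abs, sq_abs]
    have e3 : ⟪f, vt + t • w⟫ = ⟪f, vt⟫ + t * ⟪f, w⟫ := by
      rw [inner_add_right, real_inner_smul_right]
    have e4 : ‖vt + t • w‖ ≤ ‖vt‖ + t * ‖w‖ := by
      calc ‖vt + t • w‖ ≤ ‖vt‖ + ‖t • w‖ := norm_add_le _ _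
        _ = ‖vt‖ + t * ‖w‖ := by rw [norm_smul, Real.norm_eq_abs, abs_of_pos ht]
    have e5 : ⟪A vt, A w⟫ = ⟪L (A vt), w⟫ := by
      rw [hA, adjoint_inner_right]
    have e6 : ⟪L (A vt) - f, w⟫ = ⟪L (A vt), w⟫ - ⟪f, w⟫ := inner_sub_left _ _ _
    rw [e1, e2, e3] at h
    have h7 : 0 ≤ t * ((⟪L (A vt) - f, w⟫ + ε * ‖w‖) + t * (‖A w‖^2 / 2)) := by
      rw [e6, ← e5]
      nlinarith [mul_le_mul_of_nonneg_left e4 (le_of_lt hε)]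
    exact cancel_pos ht h7
  -- Radial optimality: ‖A vt‖² + ε‖vt‖ = ⟪f, vt⟫
  have key2 : ‖A vt‖^2 + (ε * ‖vt‖ - ⟪f, vt⟫) = 0 := by
    have hrad : ∀ t : ℝ, 0 < t →
        (1/2) * ‖A vt‖^2 + ε * ‖vt‖ - ⟪f, vt⟫ ≤
          t^2 * ((1/2) * ‖A vt‖^2) + t * (ε * ‖vt‖ - ⟪f, vt⟫) + ⟪f, vt⟫ - ⟪f, vt⟫ := by
      intro t ht
      have h := hmin (t • vt)
      simp only at h
      have e1 : A (t • vt) = t • A vt := map_smul _ _ _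
      have e2 : ‖t • A vt‖^2 = t^2 * ‖A vt‖^2 := by
        rw [norm_smul, Real.norm_eq_abs, mul_pow, sq_abs]
      have e3 : ‖t • vt‖ = t * ‖vt‖ := by
        rw [norm_smul, Real.norm_eq_abs, abs_of_pos ht]
      have e4 : ⟪f, t • vt⟫ = t * ⟪f, vt⟫ := real_inner_smul_right _ _ _
      rw [e1, e2, e3, e4] at h
      linarith
    have hge : 0 ≤ ‖A vt‖^2 + (ε * ‖vt‖ - ⟪f, vt⟫) := by
      apply aux_nonneg (b := ‖A vt‖^2 / 2) (by positivity)
      intro s hs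
      have h := hrad (1 + s) (by linarith)
      have h7 : 0 ≤ s * ((‖A vt‖^2 + (ε * ‖vt‖ - ⟪f, vt⟫)) + s * (‖A vt‖^2 / 2)) := by
        nlinarith
      exact cancel_pos hs h7
    have hle : ‖A vt‖^2 + (ε * ‖vt‖ - ⟪f, vt⟫) ≤ 0 := by
      apply aux_nonpos (b := ‖A vt‖^2 / 2) (by positivity)
      intro s hs hs1
      have h := hrad (1 - s) (by linarith)
      have h7 : 0 ≤ s * (s * (‖A vt‖^2 / 2) - (‖A vt‖^2 + (ε * ‖vt‖ - ⟪f, vt⟫))) := by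
        nlinarith
      have := cancel_pos hs h7
      linarith
    linarith
  constructor
  · -- feasibility
    have h := key1 (-(L (A vt) - f))
    rw [inner_neg_right, norm_neg] at h
    have hg : ⟪L (A vt) - f, L (A vt) - f⟫ = ‖L (A vt) - f‖^2 :=
      real_inner_self_eq_norm_sq _
    rcases eq_or_lt_of_le (norm_nonneg (L (A vt) - f)) with h0 | h0
    · rw [← h0]; linarith
    · have : ‖L (A vt) - f‖^2 ≤ ε * ‖L (A vt) - f‖ := by
        rw [← hg]; linarith
      nlinarith
  · -- minimality
    intro u hu
    have h1 : ⟪f - L u, vt⟫ ≤ ε * ‖vt‖ := by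
      calc ⟪f - L u, vt⟫ ≤ ‖f - L u‖ * ‖vt‖ := real_inner_le_norm _ _
        _ ≤ ε * ‖vt‖ := by
            apply mul_le_mul_of_nonneg_right _ (norm_nonneg _)
            rwa [← norm_neg, neg_sub] at hu
    have h2 : ⟪L u, vt⟫ = ⟪u, A vt⟫ := by
      rw [hA, adjoint_inner_right]
    have h3 : ⟪u, A vt⟫ ≤ ‖u‖ * ‖A vt‖ := real_inner_le_norm _ _
    have h4 : ⟪f, vt⟫ = ⟪f - L u, vt⟫ + ⟪L u, vt⟫ := by
      rw [← inner_add_left, sub_add_cancel]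
    have h5 : ‖A vt‖^2 ≤ ‖u‖ * ‖A vt‖ := by
      have : ‖A vt‖^2 = ⟪f, vt⟫ - ε * ‖vt‖ := by linarith
      rw [this, h4]
      linarith [h2 ▸ h3]
    rcases eq_or_lt_of_le (norm_nonneg (A vt)) with h0 | h0
    · rw [← h0]; exact norm_nonneg u
    · have h6 : ‖A vt‖ * ‖A vt‖ ≤ ‖u‖ * ‖A vt‖ := by rw [← pow_two]; exact h5
      exact le_of_mul_le_mul_right h6 h0
end

section
/- The functional J is coercive with rate ε: for every sequence (vₙ) in Y with ‖vₙ‖ → ∞, one has liminfₙ J(vₙ)/‖vₙ‖ ≥ ε. -/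
/-!
Since `L*` is injective, `L` has dense range, so `f` is within any `δ > 0` of some `L x`.
Splitting `⟪f, v⟫ = ⟪x, L* v⟫ + ⟪f - L x, v⟫` and absorbing the first term into the
quadratic part by Young's inequality gives `J v ≥ (ε - δ) ‖v‖ - ‖x‖² / 2`, whence
`liminf J(vₙ)/‖vₙ‖ ≥ ε - δ` for every `δ > 0`.
-/

open RealInnerProductSpace ContinuousLinearMap Filter Topology

theorem denseRange_of_injective_adjoint {𝕜 E F : Type*} [RCLike 𝕜]
    [NormedAddCommGroup E] [InnerProductSpace 𝕜 E] [CompleteSpace E]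
    [NormedAddCommGroup F] [InnerProductSpace 𝕜 F] [CompleteSpace F]
    {T : E →L[𝕜] F} (hT : Function.Injective (adjoint T)) : DenseRange T := by
  have h : T.rangeᗮ = ⊥ := by rw [orthogonal_range, LinearMap.ker_eq_bot.mpr hT]
  rw [← Submodule.topologicalClosure_eq_top_iff,
    ← Submodule.dense_iff_topologicalClosure_eq_top] at h
  simpa only [DenseRange, LinearMap.coe_range, coe_coe] using h

theorem real_inner_le_half_sq_adjoint_add {X Y : Type*}
    [NormedAddCommGroup X] [InnerProductSpace ℝ X] [CompleteSpace X]
    [NormedAddCommGroup Y] [InnerProductSpace ℝ Y] [CompleteSpace Y]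
    (L : X →L[ℝ] Y) (f w : Y) (x : X) :
    ⟪f, w⟫ ≤ ‖adjoint L w‖ ^ 2 / 2 + ‖x‖ ^ 2 / 2 + ‖f - L x‖ * ‖w‖ := by
  have hsplit : ⟪f, w⟫ = ⟪x, adjoint L w⟫ + ⟪f - L x, w⟫ := by
    rw [adjoint_inner_right, inner_sub_left]; ring
  have h₁ : ⟪x, adjoint L w⟫ ≤ ‖x‖ * ‖adjoint L w‖ := real_inner_le_norm _ _
  have h₂ : ⟪f - L x, w⟫ ≤ ‖f - L x‖ * ‖w‖ := real_inner_le_norm _ _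
  nlinarith [sq_nonneg (‖x‖ - ‖adjoint L w‖)]

theorem EReal.le_liminf_div_of_mul_sub_le {ι : Type*} {l : Filter ι} [l.NeBot] {r g : ι → ℝ}
    {b C : ℝ} (hr : Tendsto r l atTop) (h : ∀ i, b * r i - C ≤ g i) :
    (b : EReal) ≤ liminf (fun i => ((g i / r i : ℝ) : EReal)) l := by
  have hlow : Tendsto (fun i => ((b - C / r i : ℝ) : EReal)) l (𝓝 b) := by
    have := (hr.inv_tendsto_atTop.const_mul C).const_sub b
    simp only [mul_zero, sub_zero] at this
    exact (continuous_coe_real_ereal.tendsto b).comp this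
  calc (b : EReal) = liminf (fun i => ((b - C / r i : ℝ) : EReal)) l := hlow.liminf_eq.symm
    _ ≤ _ := liminf_le_liminf <| (hr.eventually_gt_atTop 0).mono fun i hi => by
        rw [EReal.coe_le_coe_iff, le_div_iff₀ hi, sub_mul, div_mul_cancel₀ _ hi.ne']
        exact h i

theorem J_coercive_general
    {X Y : Type*} [NormedAddCommGroup X] [InnerProductSpace ℝ X] [CompleteSpace X]
    [NormedAddCommGroup Y] [InnerProductSpace ℝ Y] [CompleteSpace Y]
    (L : X →L[ℝ] Y) (hinj : Function.Injective (adjoint L))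
    (f : Y) (ε : ℝ)
    (J : Y → ℝ)
    (hJ : J = fun v => (1/2) * ‖adjoint L v‖^2 + ε * ‖v‖ - ⟪f, v⟫)
    (v : ℕ → Y) (hv : Filter.Tendsto (fun n => ‖v n‖) Filter.atTop Filter.atTop) :
    (ε : EReal) ≤ Filter.liminf (fun n => ((J (v n) / ‖v n‖ : ℝ) : EReal)) Filter.atTop := by
  refine le_of_forall_lt_imp_le_of_dense fun c hc => ?_
  obtain ⟨a, hca, haε⟩ := EReal.exists_between_coe_real hc
  obtain ⟨x, hx⟩ := (denseRange_of_injective_adjoint hinj).exists_dist_lt f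
    (sub_pos.mpr (EReal.coe_lt_coe_iff.mp haε))
  rw [dist_eq_norm] at hx
  have hJ_lower (w : Y) : (ε - ‖f - L x‖) * ‖w‖ - ‖x‖ ^ 2 / 2 ≤ J w := by
    have := real_inner_le_half_sq_adjoint_add L f w x
    rw [hJ]
    linarith
  calc c ≤ ((ε - ‖f - L x‖ : ℝ) : EReal) :=
        hca.le.trans (EReal.coe_le_coe_iff.mpr (by linarith))
    _ ≤ _ := EReal.le_liminf_div_of_mul_sub_le hv fun n => hJ_lower (v n)

/-- The functional J(v) = (1/2)‖L*v‖² + ε‖v‖ − ⟨f, v⟩ is coercive with rate ε: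
for any sequence with ‖vₙ‖ → ∞, liminf J(vₙ)/‖vₙ‖ ≥ ε. -/
theorem J_coercive
    {X Y : Type*} [NormedAddCommGroup X] [InnerProductSpace ℝ X] [CompleteSpace X]
    [NormedAddCommGroup Y] [InnerProductSpace ℝ Y] [CompleteSpace Y]
    (L : X →L[ℝ] Y) (hinj : Function.Injective (adjoint L))
    (f : Y) (ε : ℝ) (hε : 0 < ε)
    (J : Y → ℝ)
    (hJ : J = fun v => (1/2) * ‖adjoint L v‖^2 + ε * ‖v‖ - ⟪f, v⟫)
    (v : ℕ → Y) (hv : Filter.Tendsto (fun n => ‖v n‖) Filter.atTop Filter.atTop) :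
    (ε : EReal) ≤ Filter.liminf (fun n => ((J (v n) / ‖v n‖ : ℝ) : EReal)) Filter.atTop :=
  J_coercive_general L hinj f ε J hJ v hv
end

section
/- The functional J attains its minimum over Y at a unique point: there exists ṽ ∈ Y such that J(ṽ) ≤ J(v) for all v ∈ Y, and any two global minimizers of J coincide. -/
/-!
Strict convexity of `v ↦ ½‖L*v‖²` (as `L*` is injective) makes `J` strictly convex, so it has at
most one minimizer. Since `L` has dense range, `f = L x + r` with `‖r‖ < ε`, whence
`J v ≥ (ε - ‖r‖) ‖v‖ - ‖x‖² / 2`. The sublevel sets `{J ≤ inf J + 1/(n+1)}` are therefore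
bounded, closed, convex and nested, and in a Hilbert space such a sequence has a common point:
the least-norm points of the sets form a Cauchy sequence, because the least-norm point `v` of a
closed convex set satisfies `‖w - v‖² ≤ ‖w‖² - ‖v‖²` on it.
-/

open RealInnerProductSpace ContinuousLinearMap Filter Set Bornology Topology

section Convexity

variable {𝕜 E F β : Type*} [Semiring 𝕜] [PartialOrder 𝕜]
  [AddCommMonoid E] [AddCommMonoid F] [Module 𝕜 E] [Module 𝕜 F]
  [AddCommMonoid β] [PartialOrder β] [SMul 𝕜 β]

theorem StrictConvexOn.comp_injective_linearMap {f : F → β} (hf : StrictConvexOn 𝕜 univ f)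
    (g : E →ₗ[𝕜] F) (hg : Function.Injective g) : StrictConvexOn 𝕜 univ (f ∘ g) :=
  ⟨convex_univ, fun x _ y _ hxy a b ha hb hab => by
    simpa using hf.2 trivial trivial (hg.ne hxy) ha hb hab⟩

end Convexity

section Hilbert

variable {E : Type*} [NormedAddCommGroup E]

theorem isBounded_setOf_le_of_linear_growth {f : E → ℝ} {δ c : ℝ} (hδ : 0 < δ)
    (hf : ∀ x, δ * ‖x‖ - c ≤ f x) (a : ℝ) : IsBounded {x | f x ≤ a} :=
  (Metric.isBounded_closedBall (x := 0) (r := (a + c) / δ)).subset fun x hx => by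
    rw [mem_closedBall_zero_iff, le_div_iff₀ hδ]
    linarith [hf x, show f x ≤ a from hx]

variable [InnerProductSpace ℝ E]

theorem strictConvexOn_half_norm_sq : StrictConvexOn ℝ univ fun x : E => 1 / 2 * ‖x‖ ^ 2 :=
  ((strongConvexOn_iff_convex (m := 1)).2 (by simpa using convexOn_const (0 : ℝ) convex_univ)
    ).strictConvexOn one_pos

variable [CompleteSpace E]

theorem exists_mem_forall_norm_sub_sq_le {K : Set E} (hne : K.Nonempty) (hK : IsClosed K)
    (hconv : Convex ℝ K) : ∃ v ∈ K, ∀ w ∈ K, ‖w - v‖ ^ 2 ≤ ‖w‖ ^ 2 - ‖v‖ ^ 2 := by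
  obtain ⟨v, hv, hinf⟩ := exists_norm_eq_iInf_of_complete_convex hne hK.isComplete hconv 0
  refine ⟨v, hv, fun w hw => ?_⟩
  have hangle : ⟪0 - v, w - v⟫ ≤ 0 := (norm_eq_iInf_iff_real_inner_le_zero hconv hv).1 hinf w hw
  have hsplit := norm_add_sq_real v (w - v)
  rw [add_sub_cancel] at hsplit
  rw [zero_sub, inner_neg_left] at hangle
  linarith

theorem nonempty_iInter_of_antitone_convex {C : ℕ → Set E} (hanti : Antitone C)
    (hne : ∀ n, (C n).Nonempty) (hclosed : ∀ n, IsClosed (C n)) (hconv : ∀ n, Convex ℝ (C n))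
    (hbdd : IsBounded (C 0)) : (⋂ n, C n).Nonempty := by
  choose p hpC hp using fun n => exists_mem_forall_norm_sub_sq_le (hne n) (hclosed n) (hconv n)
  have hdist : ∀ n k, n ≤ k → ‖p k - p n‖ ^ 2 ≤ ‖p k‖ ^ 2 - ‖p n‖ ^ 2 :=
    fun n k hnk => hp n (p k) (hanti hnk (hpC k))
  have hmono : Monotone fun n => ‖p n‖ ^ 2 := fun n k hnk => by
    nlinarith [hdist n k hnk, sq_nonneg ‖p k - p n‖]
  obtain ⟨R, hR⟩ := hbdd.exists_norm_le
  have hbddAbove : BddAbove (range fun n => ‖p n‖ ^ 2) := ⟨R ^ 2, by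
    rintro _ ⟨n, rfl⟩
    exact pow_le_pow_left₀ (norm_nonneg _) (hR _ (hanti (Nat.zero_le n) (hpC n))) 2⟩
  set D := ⨆ n, ‖p n‖ ^ 2
  have hlim : Tendsto (fun n => ‖p n‖ ^ 2) atTop (𝓝 D) := tendsto_atTop_ciSup hmono hbddAbove
  have hcauchy : CauchySeq p := by
    refine cauchySeq_of_le_tendsto_0' (fun n => √(D - ‖p n‖ ^ 2)) (fun n k hnk => ?_) ?_
    · rw [dist_comm, dist_eq_norm,
        Real.le_sqrt (norm_nonneg _) (sub_nonneg.2 (le_ciSup hbddAbove n))]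
      linarith [hdist n k hnk, le_ciSup hbddAbove k]
    · simpa using ((tendsto_const_nhds (x := D)).sub hlim).sqrt
  obtain ⟨x, hx⟩ := cauchySeq_tendsto_of_complete hcauchy
  exact ⟨x, mem_iInter.2 fun n => (hclosed n).mem_of_tendsto hx
    (eventually_atTop.2 ⟨n, fun k hk => hanti hk (hpC k)⟩)⟩

theorem ConvexOn.exists_forall_le_of_isBounded_sublevel {f : E → ℝ} (hf : ConvexOn ℝ univ f)
    (hlsc : LowerSemicontinuous f) (hbelow : BddBelow (range f))
    (hsub : ∀ a, IsBounded {x | f x ≤ a}) : ∃ x, ∀ y, f x ≤ f y := by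
  set m := ⨅ x, f x
  let C : ℕ → Set E := fun n => {x | f x ≤ m + 1 / (n + 1)}
  have hanti : Antitone C := fun n k hnk x (hx : f x ≤ _) =>
    show f x ≤ _ from hx.trans (by gcongr)
  have hne : ∀ n, (C n).Nonempty := fun n =>
    (exists_lt_of_ciInf_lt (lt_add_of_pos_right m (by positivity))).imp fun _ => le_of_lt
  have hconv : ∀ n, Convex ℝ (C n) := fun n => by
    simpa only [sep_univ] using hf.convex_le (m + 1 / (n + 1))
  obtain ⟨x, hx⟩ := nonempty_iInter_of_antitone_convex hanti hne
    (fun n => hlsc.isClosed_preimage _) hconv (hsub _)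
  have hlim : Tendsto (fun n : ℕ => m + 1 / ((n : ℝ) + 1)) atTop (𝓝 m) := by
    simpa using tendsto_const_nhds.add (tendsto_one_div_add_atTop_nhds_zero_nat (𝕜 := ℝ))
  have hxm : f x ≤ m := ge_of_tendsto' hlim (mem_iInter.1 hx)
  exact ⟨x, fun y => hxm.trans (ciInf_le hbelow y)⟩

end Hilbert

section Adjoint

variable {X Y : Type*} [NormedAddCommGroup X] [InnerProductSpace ℝ X] [CompleteSpace X]
  [NormedAddCommGroup Y] [InnerProductSpace ℝ Y] [CompleteSpace Y]

theorem ContinuousLinearMap.denseRange_of_injective_adjoint (L : X →L[ℝ] Y)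
    (h : Function.Injective (adjoint L)) : DenseRange L := by
  rw [denseRange_iff_closure_range]
  have := (LinearMap.range L.toLinearMap).topologicalClosure_eq_top_iff.2
    (by rw [orthogonal_range]; exact LinearMap.ker_eq_bot.2 h)
  have hc := congrArg SetLike.coe this
  rwa [Submodule.topologicalClosure_coe, LinearMap.coe_range, coe_coe, Submodule.top_coe] at hc

theorem ContinuousLinearMap.inner_le_half_norm_sq_adjoint_add (L : X →L[ℝ] Y) (f : Y) (x : X)
    (v : Y) : ⟪f, v⟫ ≤ (‖adjoint L v‖ ^ 2 + ‖x‖ ^ 2) / 2 + ‖f - L x‖ * ‖v‖ := by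
  have hsplit : ⟪f, v⟫ = ⟪x, adjoint L v⟫ + ⟪f - L x, v⟫ := by
    rw [adjoint_inner_right, ← inner_add_left, add_sub_cancel]
  have h₁ := real_inner_le_norm x (adjoint L v)
  have h₂ := real_inner_le_norm (f - L x) v
  nlinarith [sq_nonneg (‖adjoint L v‖ - ‖x‖)]

end Adjoint

/-- The functional J(v) = (1/2)‖L*v‖² + ε‖v‖ − ⟨f, v⟩ attains its minimum over Y
at a unique point. -/
theorem J_has_unique_minimizer
    {X Y : Type*} [NormedAddCommGroup X] [InnerProductSpace ℝ X] [CompleteSpace X]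
    [NormedAddCommGroup Y] [InnerProductSpace ℝ Y] [CompleteSpace Y]
    (L : X →L[ℝ] Y) (hinj : Function.Injective (adjoint L))
    (f : Y) (ε : ℝ) (hε : 0 < ε)
    (J : Y → ℝ)
    (hJ : J = fun v => (1/2) * ‖adjoint L v‖^2 + ε * ‖v‖ - ⟪f, v⟫) :
    ∃! vt : Y, ∀ v : Y, J vt ≤ J v := by
  have hstrict : StrictConvexOn ℝ univ J := hJ ▸
    ((strictConvexOn_half_norm_sq.comp_injective_linearMap (adjoint L).toLinearMap hinj
      ).add_convexOn (convexOn_univ_norm.smul hε.le)).sub_concaveOn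
      ((innerₛₗ ℝ f).concaveOn convex_univ)
  have hcont : Continuous J := hJ ▸ by fun_prop
  obtain ⟨x, hx⟩ := (L.denseRange_of_injective_adjoint hinj).exists_dist_lt f hε
  have hgrowth : ∀ v, (ε - ‖f - L x‖) * ‖v‖ - ‖x‖ ^ 2 / 2 ≤ J v := fun v => by
    rw [hJ]
    linarith [L.inner_le_half_norm_sq_adjoint_add f x v]
  have hδ : 0 < ε - ‖f - L x‖ := sub_pos.2 (by rwa [← dist_eq_norm])
  have hbelow : BddBelow (range J) := ⟨-(‖x‖ ^ 2 / 2), by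
    rintro _ ⟨v, rfl⟩
    linarith [hgrowth v, mul_nonneg hδ.le (norm_nonneg v)]⟩
  obtain ⟨vt, hvt⟩ := hstrict.convexOn.exists_forall_le_of_isBounded_sublevel
    hcont.lowerSemicontinuous hbelow (isBounded_setOf_le_of_linear_growth hδ hgrowth)
  exact ⟨vt, hvt, fun u hu => hstrict.eq_of_isMinOn (fun v _ => hu v) (fun v _ => hvt v)
    trivial trivial⟩
end

section
/- If ‖f‖ > ε, then J attains strictly negative values: there exists v ∈ Y with J(v) < 0. Consequently any global minimizer of J is nonzero. -/
/-!
Along the ray `t ↦ t • f` the functional is the quadratic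
`t ↦ ‖L* f‖² t² / 2 - ‖f‖ (‖f‖ - ε) t`, whose linear coefficient is negative when `‖f‖ > ε`,
so it is negative for small `t > 0`. Since `J 0 = 0`, a global minimizer cannot be `0`.
-/

open RealInnerProductSpace ContinuousLinearMap

lemma exists_pos_mul_sq_add_mul_neg {a b : ℝ} (ha : 0 ≤ a) (hb : b < 0) :
    ∃ t > 0, a * t ^ 2 + b * t < 0 := by
  have ha' : 0 < a + 1 := by linarith
  refine ⟨-b / (a + 1), div_pos (neg_pos.mpr hb) ha', ?_⟩
  have hvalue : a * (-b / (a + 1)) ^ 2 + b * (-b / (a + 1)) = -b ^ 2 / (a + 1) ^ 2 := by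
    field_simp
    ring
  rw [hvalue]
  exact div_neg_of_neg_of_pos (neg_neg_of_pos (sq_pos_of_neg hb)) (by positivity)

section Ray

variable {X Y : Type*} [SeminormedAddCommGroup X] [NormedSpace ℝ X]
  [NormedAddCommGroup Y] [InnerProductSpace ℝ Y]

lemma half_norm_sq_add_mul_norm_sub_inner_smul_self (T : Y →ₗ[ℝ] X) (ε : ℝ) (f : Y) {t : ℝ}
    (ht : 0 ≤ t) :
    (1 / 2) * ‖T (t • f)‖ ^ 2 + ε * ‖t • f‖ - ⟪f, t • f⟫
      = (1 / 2 * ‖T f‖ ^ 2) * t ^ 2 + (ε * ‖f‖ - ‖f‖ ^ 2) * t := by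
  rw [map_smul, norm_smul, norm_smul, Real.norm_of_nonneg ht, real_inner_smul_right,
    real_inner_self_eq_norm_sq]
  ring

lemma exists_half_norm_sq_add_mul_norm_sub_inner_neg (T : Y →ₗ[ℝ] X) {ε : ℝ} {f : Y}
    (hε : 0 < ε) (hf : ε < ‖f‖) :
    ∃ v : Y, (1 / 2) * ‖T v‖ ^ 2 + ε * ‖v‖ - ⟪f, v⟫ < 0 := by
  have hslope : ε * ‖f‖ - ‖f‖ ^ 2 < 0 := by nlinarith
  obtain ⟨t, ht, hneg⟩ := exists_pos_mul_sq_add_mul_neg (by positivity : 0 ≤ 1 / 2 * ‖T f‖ ^ 2)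
    hslope
  exact ⟨t • f, by rwa [half_norm_sq_add_mul_norm_sub_inner_smul_self T ε f ht.le]⟩

end Ray

theorem J_neg_values_of_large_target_general
    {X Y : Type*} [NormedAddCommGroup X] [InnerProductSpace ℝ X] [CompleteSpace X]
    [NormedAddCommGroup Y] [InnerProductSpace ℝ Y] [CompleteSpace Y]
    (L : X →L[ℝ] Y)
    (f : Y) (ε : ℝ) (hε : 0 < ε)
    (J : Y → ℝ)
    (hJ : J = fun v => (1/2) * ‖adjoint L v‖^2 + ε * ‖v‖ - ⟪f, v⟫)
    (hf : ε < ‖f‖) :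
    (∃ v : Y, J v < 0) ∧ ∀ vt : Y, (∀ v : Y, J vt ≤ J v) → vt ≠ 0 := by
  subst hJ
  obtain ⟨v, hv⟩ :=
    exists_half_norm_sq_add_mul_norm_sub_inner_neg (adjoint L).toLinearMap hε hf
  refine ⟨⟨v, hv⟩, fun vt hmin hvt => ?_⟩
  have hle := hmin v
  simp only [hvt, map_zero, norm_zero, inner_zero_right] at hle
  simp only [coe_coe] at hv
  linarith

/-- If ‖f‖ > ε then J attains strictly negative values, and consequently every
global minimizer of J is nonzero. -/
theorem J_neg_values_of_large_target
    {X Y : Type*} [NormedAddCommGroup X] [InnerProductSpace ℝ X] [CompleteSpace X]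
    [NormedAddCommGroup Y] [InnerProductSpace ℝ Y] [CompleteSpace Y]
    (L : X →L[ℝ] Y) (hinj : Function.Injective (adjoint L))
    (f : Y) (ε : ℝ) (hε : 0 < ε)
    (J : Y → ℝ)
    (hJ : J = fun v => (1/2) * ‖adjoint L v‖^2 + ε * ‖v‖ - ⟪f, v⟫)
    (hf : ε < ‖f‖) :
    (∃ v : Y, J v < 0) ∧ ∀ vt : Y, (∀ v : Y, J vt ≤ J v) → vt ≠ 0 :=
  J_neg_values_of_large_target_general L f ε hε J hJ hf
end

section
/- The Euler–Lagrange equation has at most one nonzero solution: if v, w ∈ Y are both nonzero and satisfy L L* v + ε v/‖v‖ − f = 0 and L L* w + ε w/‖w‖ − f = 0, then v = w. -/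
open RealInnerProductSpace ContinuousLinearMap

/-- The Euler–Lagrange equation L L* v + ε v/‖v‖ − f = 0 has at most one nonzero
solution. -/
theorem EulerLagrange_unique_nonzero_solution
    {X Y : Type*} [NormedAddCommGroup X] [InnerProductSpace ℝ X] [CompleteSpace X]
    [NormedAddCommGroup Y] [InnerProductSpace ℝ Y] [CompleteSpace Y]
    (L : X →L[ℝ] Y) (hinj : Function.Injective (adjoint L))
    (f : Y) (ε : ℝ) (hε : 0 < ε)
    (v w : Y) (hv : v ≠ 0) (hw : w ≠ 0)
    (hELv : L (adjoint L v) + (ε / ‖v‖) • v - f = 0)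
    (hELw : L (adjoint L w) + (ε / ‖w‖) • w - f = 0) :
    v = w := by
  have hnv : (0:ℝ) < ‖v‖ := norm_pos_iff.mpr hv
  have hnw : (0:ℝ) < ‖w‖ := norm_pos_iff.mpr hw
  have heq : L (adjoint L v) + (ε / ‖v‖) • v = L (adjoint L w) + (ε / ‖w‖) • w := by
    have h1 : L (adjoint L v) + (ε / ‖v‖) • v = f := by
      have := hELv; linear_combination (norm := abel_nf) this
    have h2 : L (adjoint L w) + (ε / ‖w‖) • w = f := by
      have := hELw; linear_combination (norm := abel_nf) this
    rw [h1, h2]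
  have key : L (adjoint L (v - w)) = (ε / ‖w‖) • w - (ε / ‖v‖) • v := by
    rw [map_sub, map_sub]
    linear_combination (norm := abel_nf) heq
  -- inner product with v - w
  have hinner : ‖adjoint L (v - w)‖ ^ 2 = ⟪(ε / ‖w‖) • w - (ε / ‖v‖) • v, v - w⟫ := by
    rw [← key, real_inner_comm, ← ContinuousLinearMap.adjoint_inner_left]
    exact (real_inner_self_eq_norm_sq _).symm
  have hCS : ⟪v, w⟫ ≤ ‖v‖ * ‖w‖ := real_inner_le_norm v w
  have hrhs : ⟪(ε / ‖w‖) • w - (ε / ‖v‖) • v, v - w⟫ ≤ 0 := by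
    rw [inner_sub_left, inner_sub_right, inner_sub_right, real_inner_smul_left,
      real_inner_smul_left, real_inner_smul_left, real_inner_smul_left,
      real_inner_self_eq_norm_sq, real_inner_self_eq_norm_sq]
    have hwv : ⟪w, v⟫ = ⟪v, w⟫ := real_inner_comm v w
    rw [hwv]
    have h1 : ε / ‖w‖ * ⟪v, w⟫ ≤ ε / ‖w‖ * (‖v‖ * ‖w‖) := by
      apply mul_le_mul_of_nonneg_left hCS (le_of_lt (div_pos hε hnw))
    have h2 : ε / ‖v‖ * ⟪v, w⟫ ≤ ε / ‖v‖ * (‖v‖ * ‖w‖) := by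
      apply mul_le_mul_of_nonneg_left hCS (le_of_lt (div_pos hε hnv))
    have e1 : ε / ‖w‖ * (‖v‖ * ‖w‖) = ε * ‖v‖ := by field_simp
    have e2 : ε / ‖v‖ * (‖v‖ * ‖w‖) = ε * ‖w‖ := by field_simp
    have e3 : ε / ‖w‖ * ‖w‖ ^ 2 = ε * ‖w‖ := by field_simp
    have e4 : ε / ‖v‖ * ‖v‖ ^ 2 = ε * ‖v‖ := by field_simp
    nlinarith [h1, h2]
  have hzero : adjoint L (v - w) = 0 := by
    have : ‖adjoint L (v - w)‖ ^ 2 ≤ 0 := hinner ▸ hrhs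
    have : ‖adjoint L (v - w)‖ = 0 := by nlinarith [norm_nonneg (adjoint L (v - w))]
    exact norm_eq_zero.mp this
  have : v - w = 0 := by
    apply hinj
    rw [hzero, map_zero]
  exact sub_eq_zero.mp this
end

section
/- Let E ⊆ Y be a finite-dimensional subspace, P_{E⊥} the orthogonal projection of Y onto the orthogonal complement of E, and let ṽ_E ∈ Y be a global minimizer over Y of the functional J_E(v) = (1/2)‖L*v‖² + ε‖P_{E⊥} v‖ − ⟨f, v⟩. Then for every z ∈ Y one has |⟨f, z⟩ − ⟨L*ṽ_E, L*z⟩| ≤ ε ‖P_{E⊥} z‖. -/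
/-!
At a minimiser `v` of `J(w) = ½‖T w‖² + ε p(w) - ⟪f, w⟫`, with `p` a seminorm, compare `J` with its
value at `v + t • z` for `t > 0`: by subadditivity and homogeneity of `p`,
`0 ≤ J(v + t • z) - J(v) ≤ t (⟪T v, T z⟫ + ε p(z) - ⟪f, z⟫) + t² ‖T z‖² / 2`.
Dividing by `t` and letting `t → 0⁺` gives `⟪f, z⟫ - ⟪T v, T z⟫ ≤ ε p(z)`, and `z ↦ -z` gives the
other sign. The theorem is the case `T = L*`, `p(w) = ‖P_{E⊥} w‖ = ‖w - P_E w‖`.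
-/

open RealInnerProductSpace ContinuousLinearMap

open Filter Topology in
lemma nonneg_of_forall_pos_mul_add_sq_mul_nonneg {a c : ℝ}
    (h : ∀ t > 0, 0 ≤ t * a + t ^ 2 * c) : 0 ≤ a := by
  have hdiv : ∀ᶠ t in 𝓝[>] (0 : ℝ), 0 ≤ a + t * c :=
    eventually_nhdsWithin_of_forall fun t (ht : 0 < t) =>
      (mul_nonneg_iff_of_pos_left ht).1 (by linarith [h t ht])
  have hlim : Tendsto (fun t : ℝ => a + t * c) (𝓝[>] 0) (𝓝 a) := by
    have : Continuous fun t : ℝ => a + t * c := by fun_prop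
    simpa using (this.tendsto 0).mono_left nhdsWithin_le_nhds
  exact ge_of_tendsto hlim hdiv

section FirstOrderCondition

variable {Y Z : Type*} [NormedAddCommGroup Y] [InnerProductSpace ℝ Y]
  [NormedAddCommGroup Z] [InnerProductSpace ℝ Z]
  (T : Y →ₗ[ℝ] Z) (p : Seminorm ℝ Y) (f : Y) {ε : ℝ} {v : Y}

lemma inner_sub_inner_map_le_of_forall_le (hε : 0 ≤ ε)
    (hmin : ∀ w, 1 / 2 * ‖T v‖ ^ 2 + ε * p v - ⟪f, v⟫ ≤ 1 / 2 * ‖T w‖ ^ 2 + ε * p w - ⟪f, w⟫)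
    (z : Y) : ⟪f, z⟫ - ⟪T v, T z⟫ ≤ ε * p z := by
  suffices 0 ≤ ε * p z - ⟪f, z⟫ + ⟪T v, T z⟫ by linarith
  refine nonneg_of_forall_pos_mul_add_sq_mul_nonneg (c := ‖T z‖ ^ 2 / 2) fun t ht => ?_
  have hquad : ‖T (v + t • z)‖ ^ 2 = ‖T v‖ ^ 2 + 2 * t * ⟪T v, T z⟫ + t ^ 2 * ‖T z‖ ^ 2 := by
    rw [map_add, map_smul, norm_add_sq_real, real_inner_smul_right, norm_smul,
      Real.norm_of_nonneg ht.le]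
    ring
  have hsub : p (v + t • z) ≤ p v + t * p z := by
    calc p (v + t • z) ≤ p v + p (t • z) := map_add_le_add p v (t • z)
      _ = p v + t * p z := by rw [map_smul_eq_mul, Real.norm_of_nonneg ht.le]
  have hlin : ⟪f, v + t • z⟫ = ⟪f, v⟫ + t * ⟪f, z⟫ := by
    rw [inner_add_right, real_inner_smul_right]
  have := hmin (v + t • z)
  rw [hquad, hlin] at this
  nlinarith [mul_le_mul_of_nonneg_left hsub hε]

lemma abs_inner_sub_inner_map_le_of_forall_le (hε : 0 ≤ ε)
    (hmin : ∀ w, 1 / 2 * ‖T v‖ ^ 2 + ε * p v - ⟪f, v⟫ ≤ 1 / 2 * ‖T w‖ ^ 2 + ε * p w - ⟪f, w⟫)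
    (z : Y) : |⟪f, z⟫ - ⟪T v, T z⟫| ≤ ε * p z := by
  have hneg := inner_sub_inner_map_le_of_forall_le T p f hε hmin (-z)
  rw [map_neg, inner_neg_right, inner_neg_right, map_neg_eq_map] at hneg
  exact abs_sub_le_iff.2 ⟨inner_sub_inner_map_le_of_forall_le T p f hε hmin z, by linarith⟩

end FirstOrderCondition

theorem finite_dimensional_variational_inequality_general
    {X Y : Type*} [NormedAddCommGroup X] [InnerProductSpace ℝ X] [CompleteSpace X]
    [NormedAddCommGroup Y] [InnerProductSpace ℝ Y] [CompleteSpace Y]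
    (L : X →L[ℝ] Y)
    (f : Y) (ε : ℝ) (hε : 0 < ε)
    (E : Submodule ℝ Y) [FiniteDimensional ℝ E]
    (JE : Y → ℝ)
    (hJE : JE = fun v => (1/2) * ‖adjoint L v‖^2
        + ε * ‖v - (E.orthogonalProjection v : Y)‖ - ⟪f, v⟫)
    (vE : Y) (hmin : ∀ v : Y, JE vE ≤ JE v) :
    ∀ z : Y, |⟪f, z⟫ - ⟪adjoint L vE, adjoint L z⟫|
        ≤ ε * ‖z - (E.orthogonalProjection z : Y)‖ := by
  subst hJE
  let distToE : Seminorm ℝ Y :=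
    (normSeminorm ℝ Y).comp (ContinuousLinearMap.id ℝ Y - E.starProjection).toLinearMap
  exact abs_inner_sub_inner_map_le_of_forall_le (adjoint L).toLinearMap distToE f hε.le hmin

/-- For a global minimizer ṽ_E of J_E(v) = (1/2)‖L*v‖² + ε‖P_{E⊥}v‖ − ⟨f, v⟩,
one has |⟨f, z⟩ − ⟨L*ṽ_E, L*z⟩| ≤ ε‖P_{E⊥}z‖ for every z ∈ Y. -/
theorem finite_dimensional_variational_inequality
    {X Y : Type*} [NormedAddCommGroup X] [InnerProductSpace ℝ X] [CompleteSpace X]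
    [NormedAddCommGroup Y] [InnerProductSpace ℝ Y] [CompleteSpace Y]
    (L : X →L[ℝ] Y) (hinj : Function.Injective (adjoint L))
    (f : Y) (ε : ℝ) (hε : 0 < ε)
    (E : Submodule ℝ Y) [FiniteDimensional ℝ E]
    (JE : Y → ℝ)
    (hJE : JE = fun v => (1/2) * ‖adjoint L v‖^2
        + ε * ‖v - (E.orthogonalProjection v : Y)‖ - ⟪f, v⟫)
    (vE : Y) (hmin : ∀ v : Y, JE vE ≤ JE v) :
    ∀ z : Y, |⟪f, z⟫ - ⟪adjoint L vE, adjoint L z⟫|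
        ≤ ε * ‖z - (E.orthogonalProjection z : Y)‖ :=
  finite_dimensional_variational_inequality_general L f ε hε E JE hJE vE hmin
end

section
/- Let E ⊆ Y be a finite-dimensional subspace, P_E the orthogonal projection of Y onto E, P_{E⊥} = I − P_E, and let ṽ_E ∈ Y be a global minimizer over Y of the functional J_E(v) = (1/2)‖L*v‖² + ε‖P_{E⊥} v‖ − ⟨f, v⟩. Then the approximate solution u_E = L*ṽ_E matches the target on E: P_E(L(L*ṽ_E)) = P_E(f). -/
open RealInnerProductSpace ContinuousLinearMap

lemma eq_zero_of_forall_quadratic_nonneg {a b : ℝ} (h : ∀ t : ℝ, 0 ≤ a * (t * t) + b * t) :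
    b = 0 := by
  have hdisc := discrim_le_zero (a := a) (b := b) (c := 0) (by simpa using h)
  rw [discrim, mul_zero, sub_zero] at hdisc
  exact pow_eq_zero_iff two_ne_zero |>.mp (le_antisymm hdisc (sq_nonneg b))

lemma Submodule.add_sub_starProjection_add_of_mem {𝕜 E : Type*} [RCLike 𝕜] [NormedAddCommGroup E]
    [InnerProductSpace 𝕜 E] (K : Submodule 𝕜 E) [K.HasOrthogonalProjection] {w : E} (hw : w ∈ K)
    (v : E) : v + w - K.starProjection (v + w) = v - K.starProjection v := by
  rw [map_add, K.starProjection_eq_self_iff.mpr hw]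
  abel

section

variable {X Y : Type*} [NormedAddCommGroup X] [InnerProductSpace ℝ X]
  [NormedAddCommGroup Y] [InnerProductSpace ℝ Y]

lemma half_norm_sq_sub_inner_add_smul (T : Y →L[ℝ] X) (f v w : Y) (t : ℝ) :
    1 / 2 * ‖T (v + t • w)‖ ^ 2 - ⟪f, v + t • w⟫
      = (1 / 2 * ‖T v‖ ^ 2 - ⟪f, v⟫) + 1 / 2 * ‖T w‖ ^ 2 * (t * t)
        + (⟪T v, T w⟫ - ⟪f, w⟫) * t := by
  rw [map_add, map_smul, norm_add_sq_real, norm_smul, inner_add_right, real_inner_smul_right,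
    real_inner_smul_right, Real.norm_eq_abs, mul_pow, sq_abs]
  ring

lemma inner_map_map_eq_inner_of_forall_le_add_smul (T : Y →L[ℝ] X) {f v w : Y}
    (h : ∀ t : ℝ, 1 / 2 * ‖T v‖ ^ 2 - ⟪f, v⟫ ≤ 1 / 2 * ‖T (v + t • w)‖ ^ 2 - ⟪f, v + t • w⟫) :
    ⟪T v, T w⟫ = ⟪f, w⟫ :=
  sub_eq_zero.mp <| eq_zero_of_forall_quadratic_nonneg (a := 1 / 2 * ‖T w‖ ^ 2) fun t => by
    have ht := h t
    rw [half_norm_sq_sub_inner_add_smul] at ht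
    linarith

end

theorem finite_dimensional_exact_matching_general
    {X Y : Type*} [NormedAddCommGroup X] [InnerProductSpace ℝ X] [CompleteSpace X]
    [NormedAddCommGroup Y] [InnerProductSpace ℝ Y] [CompleteSpace Y]
    (L : X →L[ℝ] Y)
    (f : Y) (ε : ℝ)
    (E : Submodule ℝ Y) [FiniteDimensional ℝ E]
    (JE : Y → ℝ)
    (hJE : JE = fun v => (1/2) * ‖adjoint L v‖^2
        + ε * ‖v - (E.orthogonalProjection v : Y)‖ - ⟪f, v⟫)
    (vE : Y) (hmin : ∀ v : Y, JE vE ≤ JE v) :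
    E.orthogonalProjection (L (adjoint L vE)) = E.orthogonalProjection f := by
  -- Moving `vE` within `E` leaves the penalty term unchanged, so only the quadratic part competes.
  have hline : ∀ w ∈ E, ∀ t : ℝ, 1 / 2 * ‖adjoint L vE‖ ^ 2 - ⟪f, vE⟫
      ≤ 1 / 2 * ‖adjoint L (vE + t • w)‖ ^ 2 - ⟪f, vE + t • w⟫ := by
    intro w hw t
    have hv := hmin (vE + t • w)
    simp only [hJE, Submodule.orthogonalProjection, Submodule.coe_orthogonalProjectionOnto_apply,
      E.add_sub_starProjection_add_of_mem (E.smul_mem t hw)] at hv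
    linarith
  have hresidual : L (adjoint L vE) - f ∈ Eᗮ := by
    refine (E.mem_orthogonal' _).mpr fun w hw => ?_
    rw [inner_sub_left, ← adjoint_inner_right,
      inner_map_map_eq_inner_of_forall_le_add_smul _ (hline w hw), sub_self]
  rw [← sub_eq_zero, ← map_sub]
  exact Submodule.orthogonalProjectionOnto_apply_of_mem_orthogonal hresidual

/-- For a global minimizer ṽ_E of J_E(v) = (1/2)‖L*v‖² + ε‖P_{E⊥}v‖ − ⟨f, v⟩,
the approximate solution u_E = L*ṽ_E matches the target on E:
P_E(L(L*ṽ_E)) = P_E(f). -/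
theorem finite_dimensional_exact_matching
    {X Y : Type*} [NormedAddCommGroup X] [InnerProductSpace ℝ X] [CompleteSpace X]
    [NormedAddCommGroup Y] [InnerProductSpace ℝ Y] [CompleteSpace Y]
    (L : X →L[ℝ] Y) (hinj : Function.Injective (adjoint L))
    (f : Y) (ε : ℝ) (hε : 0 < ε)
    (E : Submodule ℝ Y) [FiniteDimensional ℝ E]
    (JE : Y → ℝ)
    (hJE : JE = fun v => (1/2) * ‖adjoint L v‖^2
        + ε * ‖v - (E.orthogonalProjection v : Y)‖ - ⟪f, v⟫)
    (vE : Y) (hmin : ∀ v : Y, JE vE ≤ JE v) :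
    E.orthogonalProjection (L (adjoint L vE)) = E.orthogonalProjection f :=
  finite_dimensional_exact_matching_general L f ε E JE hJE vE hmin
end

section
/- Let 𝒩 be a compact topological space, ν ↦ L_ν a continuous map from 𝒩 to the bounded linear operators from X to Y, and ν ↦ f_ν a continuous map from 𝒩 to Y with ‖f_ν‖ ≥ f₋ > ε for all ν. Assume there is a bounded self-adjoint operator Λ : Y → Y with ⟨Λ v, v⟩ > 0 for all v ≠ 0, such that ⟨L_ν L_ν* v, v⟩ ≥ ⟨Λ v, v⟩ for all ν ∈ 𝒩 and v ∈ Y. Suppose ν ↦ ṽ_ν assigns to each ν a nonzero solution of the Euler–Lagrange equation L_ν L_ν* ṽ_ν + ε ṽ_ν/‖ṽ_ν‖ − f_ν = 0. Then the family is uniformly bounded: there exists a constant v₊ such that ‖ṽ_ν‖ ≤ v₊ for all ν ∈ 𝒩. -/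
open RealInnerProductSpace ContinuousLinearMap

/-! Since `Λ` is self-adjoint and injective, its range is dense, so by compactness of `{f ν}`
there is a constant `C` such that each `f ν` lies within `ε / 2` of some `Λ w` with
`⟪Λ w, w⟫ ≤ C`. Pairing the Euler–Lagrange equation with `v = ṽ_ν` gives
`ε ‖v‖ ≤ ⟪f ν, v⟫ ≤ ε ‖v‖ / 2 + ⟪Λ w, v⟫` and `⟪Λ v, v⟫ ≤ ‖f ν‖ ‖v‖`, and the Cauchy–Schwarz
inequality for the positive form `⟪Λ ·, ·⟫` turns these into `(ε ‖v‖ / 2) ^ 2 ≤ C ‖f ν‖ ‖v‖`. -/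

theorem DenseRange.exists_le_forall_mem_exists_dist_lt {α F : Type*} [PseudoMetricSpace F]
    {g : α → F} (hg : DenseRange g) (φ : α → ℝ) {K : Set F} (hK : IsCompact K) {δ : ℝ}
    (hδ : 0 < δ) : ∃ C, ∀ y ∈ K, ∃ a, φ a ≤ C ∧ dist y (g a) < δ := by
  have hcover : K ⊆ ⋃ a, Metric.ball (g a) δ := fun y _ ↦ by
    obtain ⟨a, ha⟩ := hg.exists_dist_lt y hδ
    exact Set.mem_iUnion.2 ⟨a, Metric.mem_ball.2 ha⟩
  obtain ⟨s, hs⟩ := hK.elim_finite_subcover _ (fun _ ↦ Metric.isOpen_ball) hcover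
  obtain ⟨C, hC⟩ := (s.finite_toSet.image φ).bddAbove
  refine ⟨C, fun y hy ↦ ?_⟩
  obtain ⟨a, ha, hya⟩ := Set.mem_iUnion₂.1 (hs hy)
  exact ⟨a, hC (Set.mem_image_of_mem φ ha), hya⟩

theorem ContinuousLinearMap.denseRange_of_isSelfAdjoint_of_injective {𝕜 E : Type*} [RCLike 𝕜]
    [NormedAddCommGroup E] [InnerProductSpace 𝕜 E] [CompleteSpace E] {T : E →L[𝕜] E}
    (hT : IsSelfAdjoint T) (hinj : Function.Injective T) : DenseRange T := by
  have hker : T.rangeᗮ = ⊥ := by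
    rw [T.orthogonal_range, hT.adjoint_eq, LinearMap.ker_eq_bot]
    exact hinj
  have := (Submodule.dense_iff_topologicalClosure_eq_top (s := T.range)).2
    (Submodule.topologicalClosure_eq_top_iff.2 hker)
  rwa [LinearMap.coe_range, ContinuousLinearMap.coe_coe] at this

theorem ContinuousLinearMap.IsPositive.inner_sq_le {E : Type*} [NormedAddCommGroup E]
    [InnerProductSpace ℝ E] {T : E →L[ℝ] E} (hT : T.IsPositive) (x y : E) :
    ⟪T x, y⟫ ^ 2 ≤ ⟪T x, x⟫ * ⟪T y, y⟫ := by
  have hquad : ∀ s : ℝ, 0 ≤ ⟪T y, y⟫ * (s * s) + 2 * ⟪T x, y⟫ * s + ⟪T x, x⟫ := fun s ↦ by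
    have hsym : ⟪T y, x⟫ = ⟪T x, y⟫ := by rw [hT.inner_left_eq_inner_right, real_inner_comm]
    have := hT.inner_nonneg_left (x + s • y)
    simp only [map_add, map_smul, inner_add_left, inner_add_right, real_inner_smul_left,
      real_inner_smul_right, hsym] at this
    linarith
  have := discrim_le_zero hquad
  rw [discrim] at this
  linarith

theorem norm_le_of_add_div_norm_smul_eq {Y : Type*} [NormedAddCommGroup Y] [InnerProductSpace ℝ Y]
    {Λ : Y →L[ℝ] Y} (hΛ : Λ.IsPositive) {ε : ℝ} (hε : 0 < ε) {u v f w : Y}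
    (hdom : ⟪Λ v, v⟫ ≤ ⟪u, v⟫) (hEL : u + (ε / ‖v‖) • v = f) (hw : ‖f - Λ w‖ ≤ ε / 2) :
    ‖v‖ ≤ 4 * ⟪Λ w, w⟫ * ‖f‖ / ε ^ 2 := by
  have hfv : ⟪f, v⟫ = ⟪u, v⟫ + ε * ‖v‖ := by
    rw [← hEL, inner_add_left, real_inner_smul_left, real_inner_self_eq_norm_sq]
    rcases eq_or_ne ‖v‖ 0 with hv | hv
    · simp [hv]
    · field_simp
  have hlower : ε * ‖v‖ ≤ ⟪f, v⟫ := by linarith [hΛ.inner_nonneg_left v]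
  have hupper : ⟪f, v⟫ ≤ ε / 2 * ‖v‖ + ⟪Λ w, v⟫ := by
    have := (real_inner_le_norm (f - Λ w) v).trans (mul_le_mul_of_nonneg_right hw (norm_nonneg v))
    rw [inner_sub_left] at this
    linarith
  have hΛv : ⟪Λ v, v⟫ ≤ ‖f‖ * ‖v‖ := by
    linarith [real_inner_le_norm f v, mul_nonneg hε.le (norm_nonneg v)]
  have hsq : (ε / 2 * ‖v‖) ^ 2 ≤ ⟪Λ w, w⟫ * (‖f‖ * ‖v‖) :=
    calc (ε / 2 * ‖v‖) ^ 2 ≤ ⟪Λ w, v⟫ ^ 2 := pow_le_pow_left₀ (by positivity) (by linarith) 2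
      _ ≤ ⟪Λ w, w⟫ * ⟪Λ v, v⟫ := hΛ.inner_sq_le w v
      _ ≤ ⟪Λ w, w⟫ * (‖f‖ * ‖v‖) := mul_le_mul_of_nonneg_left hΛv (hΛ.inner_nonneg_left w)
  rcases (norm_nonneg v).eq_or_lt with hv | hv
  · rw [← hv]
    have := hΛ.inner_nonneg_left w
    positivity
  · rw [le_div_iff₀ (by positivity)]
    nlinarith

theorem parametrized_solutions_uniformly_bounded_general
    {X Y : Type*} [NormedAddCommGroup X] [InnerProductSpace ℝ X] [CompleteSpace X]
    [NormedAddCommGroup Y] [InnerProductSpace ℝ Y] [CompleteSpace Y]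
    {N : Type*} [TopologicalSpace N] [CompactSpace N]
    (ε : ℝ) (hε : 0 < ε)
    (L : N → X →L[ℝ] Y)
    (f : N → Y) (hf : Continuous f)
    (Lam : Y →L[ℝ] Y) (hLamSA : IsSelfAdjoint Lam)
    (hLamPos : ∀ v : Y, v ≠ 0 → 0 < ⟪Lam v, v⟫)
    (hdom : ∀ (ν : N) (v : Y), ⟪Lam v, v⟫ ≤ ⟪(L ν) (adjoint (L ν) v), v⟫)
    (vt : N → Y)
    (hEL : ∀ ν : N, (L ν) (adjoint (L ν) (vt ν)) + (ε / ‖vt ν‖) • vt ν - f ν = 0) :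
    ∃ vp : ℝ, ∀ ν : N, ‖vt ν‖ ≤ vp := by
  have hΛ : Lam.IsPositive := (isPositive_iff' Lam).2
    ⟨hLamSA, fun v ↦ (eq_or_ne v 0).elim (fun h ↦ by simp [h]) fun h ↦ (hLamPos v h).le⟩
  have hinj : Function.Injective Lam := (injective_iff_map_eq_zero Lam).2 fun v hv ↦
    by_contra fun h ↦ (hLamPos v h).ne' (by simp [hv])
  obtain ⟨C, hC⟩ := (denseRange_of_isSelfAdjoint_of_injective hLamSA hinj)
    |>.exists_le_forall_mem_exists_dist_lt (fun w ↦ ⟪Lam w, w⟫) (isCompact_range hf) (half_pos hε)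
  obtain ⟨F, hF⟩ := (isCompact_range hf).isBounded.exists_norm_le
  refine ⟨4 * C * F / ε ^ 2, fun ν ↦ ?_⟩
  obtain ⟨w, hwC, hw⟩ := hC (f ν) (Set.mem_range_self ν)
  calc ‖vt ν‖ ≤ 4 * ⟪Lam w, w⟫ * ‖f ν‖ / ε ^ 2 :=
        norm_le_of_add_div_norm_smul_eq hΛ hε (hdom ν _) (sub_eq_zero.1 (hEL ν))
          (by rw [← dist_eq_norm]; exact hw.le)
    _ ≤ 4 * C * F / ε ^ 2 := by
        have := hΛ.inner_nonneg_left w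
        gcongr
        · linarith
        · exact hF _ (Set.mem_range_self ν)

/-- Uniform boundedness of the family of nonzero Euler–Lagrange solutions for a
continuous, compactly parametrized family of operators and targets, under a
uniform lower bound of L_ν L_ν* by a positive self-adjoint operator Λ. -/
theorem parametrized_solutions_uniformly_bounded
    {X Y : Type*} [NormedAddCommGroup X] [InnerProductSpace ℝ X] [CompleteSpace X]
    [NormedAddCommGroup Y] [InnerProductSpace ℝ Y] [CompleteSpace Y]
    {N : Type*} [TopologicalSpace N] [CompactSpace N]
    (ε : ℝ) (hε : 0 < ε)
    (L : N → X →L[ℝ] Y) (hL : Continuous L)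
    (f : N → Y) (hf : Continuous f)
    (fm : ℝ) (hfm : ε < fm) (hflb : ∀ ν : N, fm ≤ ‖f ν‖)
    (Lam : Y →L[ℝ] Y) (hLamSA : IsSelfAdjoint Lam)
    (hLamPos : ∀ v : Y, v ≠ 0 → 0 < ⟪Lam v, v⟫)
    (hdom : ∀ (ν : N) (v : Y), ⟪Lam v, v⟫ ≤ ⟪(L ν) (adjoint (L ν) v), v⟫)
    (vt : N → Y) (hvt0 : ∀ ν : N, vt ν ≠ 0)
    (hEL : ∀ ν : N, (L ν) (adjoint (L ν) (vt ν)) + (ε / ‖vt ν‖) • vt ν - f ν = 0) :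
    ∃ vp : ℝ, ∀ ν : N, ‖vt ν‖ ≤ vp :=
  parametrized_solutions_uniformly_bounded_general ε hε L f hf Lam hLamSA hLamPos hdom vt hEL
end

section
/- Let H be a real Hilbert space and Q = Q₁ + Q₂ a bounded linear operator on H, where Q₁ is a bounded positive operator (i.e. ⟨Q₁ v, v⟩ > 0 for every v ≠ 0) and Q₂ is a bounded self-adjoint operator that vanishes on a finite-dimensional subspace V₁ ⊆ H (Q₂ v = 0 for all v ∈ V₁) and is coercive on V₂ = V₁^⊥ (there exists c₂ > 0 with ⟨Q₂ v, v⟩ ≥ c₂‖v‖² for all v ∈ V₂). Then Q is coercive on H: there exists c > 0 such that ⟨Q v, v⟩ ≥ c‖v‖² for all v ∈ H. -/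
/-!
Split `v = a + b` with `a ∈ V₁` and `b ∈ V₁ᗮ`. Then `⟪Q₂ v, v⟫ = ⟪Q₂ b, b⟫ ≥ c₂ ‖b‖²`, while on the
finite-dimensional `V₁` positivity of `Q₁` is uniform (compactness of the unit sphere), so
`⟪Q₁ v, v⟫ ≥ m ‖a‖² - 2 ‖Q₁‖ ‖a‖ ‖b‖`. Together with `⟪Q₁ v, v⟫ ≥ 0` this leaves a two-variable
quadratic inequality in `‖a‖, ‖b‖`, which is coercive.
-/

open RealInnerProductSpace ContinuousLinearMap

theorem isCoercive_of_pos_of_finiteDimensional {E : Type*} [NormedAddCommGroup E]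
    [NormedSpace ℝ E] [FiniteDimensional ℝ E] (B : E →L[ℝ] E →L[ℝ] ℝ)
    (hB : ∀ u, u ≠ 0 → 0 < B u u) : IsCoercive B := by
  have hcont : Continuous fun u => B u u := by fun_prop
  obtain ⟨m, hm, hm_le⟩ := (isCompact_sphere (0 : E) 1).exists_forall_le' hcont.continuousOn
    fun u hu => hB u (ne_zero_of_mem_unit_sphere ⟨u, hu⟩)
  refine ⟨m, hm, fun u => ?_⟩
  rcases eq_or_ne u 0 with rfl | hu
  · simp
  have hnorm : 0 < ‖u‖ := norm_pos_iff.mpr hu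
  have := hm_le (‖u‖⁻¹ • u) (by simp [norm_smul, hnorm.ne'])
  simp only [map_smul, smul_apply, smul_eq_mul] at this
  field_simp at this
  linarith

theorem exists_pos_mul_sq_add_sq_le_add {m c M : ℝ} (hm : 0 < m) (hc : 0 < c) :
    ∃ κ > 0, ∀ x y q p : ℝ, 0 ≤ q → m * x ^ 2 - 2 * M * x * y ≤ q → c * y ^ 2 ≤ p →
      κ * (x ^ 2 + y ^ 2) ≤ q + p := by
  -- `q ≥ t * (m x² - 2 M x y)` for every `t ∈ [0, 1]`; this `t` is small enough for the cross
  -- term to be absorbed, via `2 M x y ≤ (m / 2) x² + (2 M² / m) y²`, into half of `c y²`.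
  set t := c * m / (c * m + 4 * M ^ 2)
  have hD : 0 < c * m + 4 * M ^ 2 := by positivity
  have ht : 0 < t := by positivity
  have ht_le : t ≤ 1 := div_le_one_of_le₀ (by nlinarith) hD.le
  have htM : 4 * t * M ^ 2 ≤ c * m := by
    have : t * (c * m + 4 * M ^ 2) = c * m := div_mul_cancel₀ _ hD.ne'
    nlinarith [mul_pos ht (mul_pos hc hm)]
  refine ⟨min (t * m / 2) (c / 2), by positivity, fun x y q p hq hqxy hp => ?_⟩
  have hmin : min (t * m / 2) (c / 2) * (x ^ 2 + y ^ 2) ≤ t * m / 2 * x ^ 2 + c / 2 * y ^ 2 := by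
    rw [mul_add]
    gcongr
    · exact min_le_left _ _
    · exact min_le_right _ _
  have hq' : t * (m * x ^ 2 - 2 * M * x * y) ≤ q := by nlinarith
  have hsq : 0 ≤ m * (t * m / 2 * x ^ 2 - 2 * t * M * x * y + c / 2 * y ^ 2) := by
    nlinarith [mul_nonneg ht.le (sq_nonneg (m * x - 2 * M * y)), sq_nonneg y]
  have := (mul_nonneg_iff_of_pos_left hm).mp hsq
  nlinarith

theorem ContinuousLinearMap.le_inner_map_add_add_self {H : Type*} [NormedAddCommGroup H]
    [InnerProductSpace ℝ H] (T : H →L[ℝ] H) (a b : H) :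
    ⟪T a, a⟫ + ⟪T b, b⟫ - 2 * ‖T‖ * ‖a‖ * ‖b‖ ≤ ⟪T (a + b), a + b⟫ := by
  have hab : |⟪T a, b⟫| ≤ ‖T‖ * ‖a‖ * ‖b‖ :=
    (abs_real_inner_le_norm _ _).trans (by gcongr; exact T.le_opNorm a)
  have hba : |⟪T b, a⟫| ≤ ‖T‖ * ‖a‖ * ‖b‖ :=
    (abs_real_inner_le_norm _ _).trans (by rw [mul_right_comm]; gcongr; exact T.le_opNorm b)
  rw [map_add, inner_add_left, inner_add_right, inner_add_right]
  linarith [neg_abs_le ⟪T a, b⟫, neg_abs_le ⟪T b, a⟫]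

theorem IsSelfAdjoint.inner_map_add_add_self_of_map_eq_zero {H : Type*} [NormedAddCommGroup H]
    [InnerProductSpace ℝ H] [CompleteSpace H] {T : H →L[ℝ] H} (hT : IsSelfAdjoint T) {a : H}
    (ha : T a = 0) (b : H) : ⟪T (a + b), a + b⟫ = ⟪T b, b⟫ := by
  have hba : ⟪T b, a⟫ = 0 := by simpa [ha] using hT.isSymmetric b a
  rw [map_add, ha, zero_add, inner_add_right, hba, zero_add]

/-- Coercivity lemma: if Q = Q₁ + Q₂ with Q₁ positive and Q₂ self-adjoint,
vanishing on a finite-dimensional subspace V₁ and coercive on V₁ᗮ, then Q is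
coercive on H. -/
theorem positive_plus_coercive_is_coercive
    {H : Type*} [NormedAddCommGroup H] [InnerProductSpace ℝ H] [CompleteSpace H]
    (Q₁ Q₂ : H →L[ℝ] H)
    (hQ₁pos : ∀ v : H, v ≠ 0 → 0 < ⟪Q₁ v, v⟫)
    (hQ₂sa : IsSelfAdjoint Q₂)
    (V₁ : Submodule ℝ H) [FiniteDimensional ℝ V₁]
    (hker : ∀ v ∈ V₁, Q₂ v = 0)
    (c₂ : ℝ) (hc₂ : 0 < c₂)
    (hcoer : ∀ v ∈ V₁ᗮ, c₂ * ‖v‖^2 ≤ ⟪Q₂ v, v⟫) :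
    ∃ c > 0, ∀ v : H, c * ‖v‖^2 ≤ ⟪(Q₁ + Q₂) v, v⟫ := by
  have hQ₁nonneg : ∀ v, 0 ≤ ⟪Q₁ v, v⟫ := fun v => by
    rcases eq_or_ne v 0 with rfl | hv
    · simp
    · exact (hQ₁pos v hv).le
  obtain ⟨m, hm, hQ₁V⟩ := isCoercive_of_pos_of_finiteDimensional
    ((innerSL ℝ).bilinearComp (Q₁ ∘L V₁.subtypeL) V₁.subtypeL)
    fun a ha => hQ₁pos a (by simpa using ha)
  obtain ⟨c, hc, hquad⟩ := exists_pos_mul_sq_add_sq_le_add (M := ‖Q₁‖) hm hc₂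
  refine ⟨c, hc, fun v => ?_⟩
  obtain ⟨a, ha, b, hb, rfl⟩ := V₁.exists_add_mem_mem_orthogonal v
  have hpyth : ‖a + b‖ ^ 2 = ‖a‖ ^ 2 + ‖b‖ ^ 2 := by
    rw [norm_add_sq_real, hb a ha]; ring
  have hQ₁a : m * ‖a‖ ^ 2 ≤ ⟪Q₁ a, a⟫ := by simpa [sq, mul_assoc] using hQ₁V ⟨a, ha⟩
  rw [add_apply, inner_add_left, hQ₂sa.inner_map_add_add_self_of_map_eq_zero (hker a ha), hpyth]
  exact hquad _ _ _ _ (hQ₁nonneg _)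
    (by linarith [Q₁.le_inner_map_add_add_self a b, hQ₁nonneg b]) (hcoer b hb)
end

section
/- Let v ∈ Y be nonzero, P_v the orthogonal projection of Y onto the span of v, and I the identity on Y. Then the operator Q = L L* + (ε/‖v‖)(I − P_v) is coercive on Y: there exists c > 0 such that ⟨Q w, w⟩ ≥ c‖w‖² for all w ∈ Y. -/
/-!
Split `w = p + u` with `p ∈ ℝ ∙ v` and `u ⊥ v`. On the line `ℝ ∙ v` the adjoint `L*` is bounded
below, since injectivity gives `L* v ≠ 0`; hence `‖p‖²` is controlled by `‖L* w‖² + ‖L*‖² ‖u‖²`,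
while `‖u‖²` is controlled by the penalty term. As `⟨Q w, w⟩ = ‖L* w‖² + (ε/‖v‖) ‖u‖²`, this bounds
`‖w‖² = ‖p‖² + ‖u‖²` by a multiple of `⟨Q w, w⟩`.
-/

open RealInnerProductSpace ContinuousLinearMap

section BoundedBelowOnSubspace

variable {𝕜 E F : Type*} [RCLike 𝕜] [NormedAddCommGroup E] [InnerProductSpace 𝕜 E]
  [SeminormedAddCommGroup F] [NormedSpace 𝕜 F]

theorem ContinuousLinearMap.norm_apply_mul_norm_eq_of_mem_span_singleton (A : E →L[𝕜] F)
    {v p : E} (hp : p ∈ 𝕜 ∙ v) : ‖A p‖ * ‖v‖ = ‖A v‖ * ‖p‖ := by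
  obtain ⟨r, rfl⟩ := Submodule.mem_span_singleton.mp hp
  rw [map_smul, norm_smul, norm_smul]
  ring

theorem ContinuousLinearMap.sq_mul_sq_norm_le_of_forall_mem_mul_norm_le (A : E →L[𝕜] F)
    (K : Submodule 𝕜 E) [K.HasOrthogonalProjection] {m : ℝ} (hm : 0 ≤ m)
    (hA : ∀ p ∈ K, m * ‖p‖ ≤ ‖A p‖) (w : E) :
    m ^ 2 * ‖w‖ ^ 2 ≤
      2 * ‖A w‖ ^ 2 + (m ^ 2 + 2 * ‖A‖ ^ 2) * ‖w - K.starProjection w‖ ^ 2 := by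
  set p := K.starProjection w
  set u := w - p
  have hAp : m * ‖p‖ ≤ ‖A w‖ + ‖A‖ * ‖u‖ :=
    calc m * ‖p‖ ≤ ‖A p‖ := hA p (K.starProjection_apply_mem w)
      _ = ‖A w - A u‖ := by simp [u]
      _ ≤ ‖A w‖ + ‖A‖ * ‖u‖ := (norm_sub_le _ _).trans (by gcongr; exact A.le_opNorm u)
  calc m ^ 2 * ‖w‖ ^ 2 = (m * ‖p‖) ^ 2 + m ^ 2 * ‖u‖ ^ 2 := by
        rw [K.norm_sq_eq_add_norm_sq_starProjection w, K.starProjection_orthogonal_val]; ring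
    _ ≤ (‖A w‖ + ‖A‖ * ‖u‖) ^ 2 + m ^ 2 * ‖u‖ ^ 2 := by gcongr
    _ ≤ 2 * (‖A w‖ ^ 2 + (‖A‖ * ‖u‖) ^ 2) + m ^ 2 * ‖u‖ ^ 2 := by gcongr; exact add_sq_le
    _ = 2 * ‖A w‖ ^ 2 + (m ^ 2 + 2 * ‖A‖ ^ 2) * ‖u‖ ^ 2 := by ring

theorem ContinuousLinearMap.exists_pos_mul_sq_norm_le_of_forall_mem_mul_norm_le (A : E →L[𝕜] F)
    (K : Submodule 𝕜 E) [K.HasOrthogonalProjection] {m δ : ℝ} (hm : 0 < m) (hδ : 0 < δ)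
    (hA : ∀ p ∈ K, m * ‖p‖ ≤ ‖A p‖) :
    ∃ c > 0, ∀ w : E,
      c * ‖w‖ ^ 2 ≤ ‖A w‖ ^ 2 + δ * ‖w - K.starProjection w‖ ^ 2 := by
  have hD : 0 < 2 * δ + m ^ 2 + 2 * ‖A‖ ^ 2 := by positivity
  refine ⟨δ * m ^ 2 / (2 * δ + m ^ 2 + 2 * ‖A‖ ^ 2), by positivity, fun w => ?_⟩
  have h := A.sq_mul_sq_norm_le_of_forall_mem_mul_norm_le K hm.le hA w
  rw [div_mul_eq_mul_div, div_le_iff₀ hD]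
  nlinarith [mul_le_mul_of_nonneg_left h hδ.le,
    mul_nonneg (by positivity : (0 : ℝ) ≤ m ^ 2 + 2 * ‖A‖ ^ 2) (sq_nonneg ‖A w‖),
    mul_nonneg (sq_nonneg δ) (sq_nonneg ‖w - K.starProjection w‖)]

end BoundedBelowOnSubspace

theorem Submodule.real_inner_sub_starProjection_self {E : Type*} [NormedAddCommGroup E]
    [InnerProductSpace ℝ E] (K : Submodule ℝ E) [K.HasOrthogonalProjection] (w : E) :
    ⟪w - K.starProjection w, w⟫ = ‖w - K.starProjection w‖ ^ 2 := by
  calc ⟪w - K.starProjection w, w⟫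
      = ⟪w - K.starProjection w, w - K.starProjection w⟫ +
          ⟪w - K.starProjection w, K.starProjection w⟫ := by
        rw [← inner_add_right, sub_add_cancel]
    _ = ‖w - K.starProjection w‖ ^ 2 := by
        rw [K.starProjection_inner_eq_zero _ _ (K.starProjection_apply_mem w), add_zero,
          real_inner_self_eq_norm_sq]

theorem ContinuousLinearMap.real_inner_apply_adjoint_self {X Y : Type*} [NormedAddCommGroup X]
    [InnerProductSpace ℝ X] [CompleteSpace X] [NormedAddCommGroup Y] [InnerProductSpace ℝ Y]
    [CompleteSpace Y] (L : X →L[ℝ] Y) (w : Y) : ⟪L (adjoint L w), w⟫ = ‖adjoint L w‖ ^ 2 := by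
  rw [← adjoint_inner_right, real_inner_self_eq_norm_sq]

/-- For nonzero v, the operator L L* + (ε/‖v‖)(I − P_v) is coercive on Y, where
P_v is the orthogonal projection onto the span of v. -/
theorem EulerLagrange_linearization_coercive
    {X Y : Type*} [NormedAddCommGroup X] [InnerProductSpace ℝ X] [CompleteSpace X]
    [NormedAddCommGroup Y] [InnerProductSpace ℝ Y] [CompleteSpace Y]
    (L : X →L[ℝ] Y) (hinj : Function.Injective (adjoint L))
    (ε : ℝ) (hε : 0 < ε) (v : Y) (hv : v ≠ 0) :
    ∃ c > 0, ∀ w : Y,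
      c * ‖w‖^2 ≤
        ⟪L (adjoint L w) + (ε / ‖v‖) • (w - (Submodule.orthogonalProjectionOnto (ℝ ∙ v) w : Y)), w⟫ := by
  have hv₀ : 0 < ‖v‖ := norm_pos_iff.mpr hv
  have hLv : 0 < ‖adjoint L v‖ := norm_pos_iff.mpr ((map_ne_zero_iff _ hinj).mpr hv)
  have hbelow : ∀ p ∈ ℝ ∙ v, ‖adjoint L v‖ / ‖v‖ * ‖p‖ ≤ ‖adjoint L p‖ := fun p hp => by
    rw [div_mul_eq_mul_div, div_le_iff₀ hv₀,
      (adjoint L).norm_apply_mul_norm_eq_of_mem_span_singleton hp]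
  obtain ⟨c, hc, hcoer⟩ := (adjoint L).exists_pos_mul_sq_norm_le_of_forall_mem_mul_norm_le
    (ℝ ∙ v) (div_pos hLv hv₀) (div_pos hε hv₀) hbelow
  refine ⟨c, hc, fun w => ?_⟩
  rw [inner_add_left, real_inner_smul_left, L.real_inner_apply_adjoint_self,
    ← Submodule.starProjection_apply, (ℝ ∙ v).real_inner_sub_starProjection_self]
  exact hcoer w
end
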